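/- For X(u,v) = (−uv f₁ + 2 f̄₁ + (u+v)e₃)/(u−v), the mixed second derivative satisfies ∂²ᵤᵥ X = −2X/(u−v)² for all u ≠ v. -/

import Mathlib

/-!
`Xsph` is the linear fractional map `(s - t)⁻¹ • (s t A + (s + t) B + C)` with vector coefficients
`A = -f₁`, `B = e₃`, `C = 2 f̄₁`. Differentiating in `t` gives `(s - t)⁻² • (s² A + 2 s B + C)`, and
differentiating that in `s` gives `-2 (s - t)⁻³ • (s t A + (s + t) B + C)`: the numerator returns
because it is symmetric in `s` and `t`.
-/

open Matrix

noncomputable def f1 : Fin 3 → ℂ := (Real.sqrt 2 : ℂ)⁻¹ • ![1, -Complex.I, 0]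
noncomputable def fbar1 : Fin 3 → ℂ := (Real.sqrt 2 : ℂ)⁻¹ • ![1, Complex.I, 0]
def e3 : Fin 3 → ℂ := ![0, 0, 1]

/-- Standard doubly ruled parametrization of the complex unit sphere. -/
noncomputable def Xsph (u v : ℂ) : Fin 3 → ℂ :=
  (u - v)⁻¹ • ((-(u * v)) • f1 + (2 : ℂ) • fbar1 + (u + v) • e3)

section

variable {𝕜 E : Type*} [NontriviallyNormedField 𝕜] [NormedAddCommGroup E] [NormedSpace 𝕜 E]

def doublyRuled (A B C : E) (s t : 𝕜) : E := (s - t)⁻¹ • ((s * t) • A + (s + t) • B + C)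

theorem hasDerivAt_inv_sub_smul_affine (A B : E) {s t : 𝕜} (h : s ≠ t) :
    HasDerivAt (fun t => (s - t)⁻¹ • (t • A + B)) (((s - t) ^ 2)⁻¹ • (s • A + B)) t := by
  have hst : s - t ≠ 0 := sub_ne_zero.mpr h
  have hden := ((hasDerivAt_id' t).const_sub s).fun_inv hst
  have hnum := ((hasDerivAt_id' t).smul_const A).add_const B
  refine (hden.fun_smul hnum).congr_deriv ?_
  match_scalars <;> field_simp
  ring

theorem hasDerivAt_inv_sub_sq_smul_quadratic (A B C : E) {s v : 𝕜} (h : s ≠ v) :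
    HasDerivAt (fun s => ((s - v) ^ 2)⁻¹ • ((s ^ 2) • A + (2 * s) • B + C))
      ((-2 / (s - v) ^ 3) • ((s * v) • A + (s + v) • B + C)) s := by
  have hsv : s - v ≠ 0 := sub_ne_zero.mpr h
  have hden := (((hasDerivAt_id' s).sub_const v).fun_pow 2).fun_inv (pow_ne_zero 2 hsv)
  have hnum := ((((hasDerivAt_id' s).fun_pow 2).smul_const A).fun_add
    (((hasDerivAt_id' s).const_mul 2).smul_const B)).add_const C
  refine (hden.fun_smul hnum).congr_deriv ?_
  match_scalars <;> field_simp <;> ring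

theorem deriv_deriv_doublyRuled (A B C : E) {u v : 𝕜} (h : u ≠ v) :
    deriv (fun s => deriv (fun t => doublyRuled A B C s t) v) u
      = (-2 / (u - v) ^ 2) • doublyRuled A B C u v := by
  have hinner : (fun s => deriv (fun t => doublyRuled A B C s t) v) =ᶠ[nhds u]
      fun s => ((s - v) ^ 2)⁻¹ • ((s ^ 2) • A + (2 * s) • B + C) := by
    filter_upwards [isOpen_ne.mem_nhds h] with s hs
    have hrw : (fun t => doublyRuled A B C s t) =
        fun t => (s - t)⁻¹ • (t • (s • A + B) + (s • B + C)) := by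
      funext t; simp only [doublyRuled]; congr 1; module
    rw [hrw, (hasDerivAt_inv_sub_smul_affine _ _ hs).deriv]
    congr 1; module
  rw [hinner.deriv_eq, (hasDerivAt_inv_sub_sq_smul_quadratic A B C h).deriv, doublyRuled,
    smul_smul]
  congr 1
  field_simp

end

theorem Xsph_eq_doublyRuled : Xsph = doublyRuled (-f1) e3 ((2 : ℂ) • fbar1) := by
  funext u v
  simp only [Xsph, doublyRuled]
  congr 1; module

/-- The mixed second derivative of the standard doubly ruled parametrization of the
unit sphere satisfies `∂²ᵤᵥ X = −2X/(u−v)²`. -/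
theorem sphere_mixed_derivative (u v : ℂ) (huv : u ≠ v) :
    deriv (fun s => deriv (fun t => Xsph s t) v) u
      = (-2 / (u - v) ^ 2) • Xsph u v := by
  rw [Xsph_eq_doublyRuled]
  exact deriv_deriv_doublyRuled _ _ _ huv
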